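/- arXiv:0811.0308 — 3 statements merged into one kernel-verified Lean document; each statement's English description precedes it below -/
import Mathlib

section
/- Let $\mathcal{N}$ be a locally finite set of points in $\mathbb{R}^d$ and let $u,v$ be two distinct points of $\mathcal{N}$. Define: $w$ is a Delaunay neighbour of $v$ if there exists a closed Euclidean ball whose boundary contains both $v$ and $w$ and whose interior contains no point of $\mathcal{N}$. Then there exists a point $w\in\mathcal{N}\setminus\{v\}$ which is a Delaunay neighbour of $v$ and which lies in the closed ball with diameter segment $[u,v]$. -/
/-!
The balls through `v` whose centres lie on the segment from `v` to `m = midpoint u v` form a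
pencil, shrinking from the ball with diameter `[u, v]` down to `v`. A point `p ≠ v` lies in the
ball of parameter `t` exactly when `‖p - v‖² ≤ 2 t ⟪p - v, m - v⟫`. Among the finitely many
points of `N \ {v}` in the largest ball, pick `w` minimising the threshold
`‖p - v‖² / (2 ⟪p - v, m - v⟫)`: the ball of that parameter has `v` and `w` on its boundary
and no point of `N` inside.
-/

open Metric RealInnerProductSpace

variable {E : Type*} [NormedAddCommGroup E] [InnerProductSpace ℝ E]

/-- The power of `p` with respect to the sphere through `v` centred at `lineMap v m t`. -/
lemma dist_lineMap_sq_sub_sq (v m p : E) (t : ℝ) :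
    dist p (AffineMap.lineMap v m t) ^ 2 - (t * dist v m) ^ 2 =
      ‖p - v‖ ^ 2 - t * (2 * ⟪p - v, m - v⟫) := by
  have hp : p - AffineMap.lineMap v m t = (p - v) - t • (m - v) := by
    rw [AffineMap.lineMap_apply_module']; abel
  rw [dist_eq_norm, hp, norm_sub_sq_real, real_inner_smul_right, norm_smul, dist_comm,
    dist_eq_norm, Real.norm_eq_abs, mul_pow, sq_abs]
  ring

lemma dist_lineMap_lt_iff {v m p : E} {t : ℝ} (ht : 0 ≤ t) :
    dist p (AffineMap.lineMap v m t) < t * dist v m ↔ ‖p - v‖ ^ 2 < t * (2 * ⟪p - v, m - v⟫) := by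
  rw [← pow_lt_pow_iff_left₀ dist_nonneg (by positivity) two_ne_zero]
  constructor <;> intro h <;> linarith [dist_lineMap_sq_sub_sq v m p t]

lemma dist_lineMap_eq_iff {v m p : E} {t : ℝ} (ht : 0 ≤ t) :
    dist p (AffineMap.lineMap v m t) = t * dist v m ↔ ‖p - v‖ ^ 2 = t * (2 * ⟪p - v, m - v⟫) := by
  rw [← pow_left_inj₀ dist_nonneg (by positivity) two_ne_zero]
  constructor <;> intro h <;> linarith [dist_lineMap_sq_sub_sq v m p t]

lemma norm_sub_sq_le_two_inner_of_mem_closedBall {v m p : E} (hp : p ∈ closedBall m (dist v m)) :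
    ‖p - v‖ ^ 2 ≤ 2 * ⟪p - v, m - v⟫ := by
  have h := dist_lineMap_sq_sub_sq v m p 1
  rw [AffineMap.lineMap_apply_one, one_mul] at h
  nlinarith [mem_closedBall.mp hp, dist_nonneg (x := p) (y := m)]

lemma ball_lineMap_subset_closedBall (v m : E) {t : ℝ} (ht : t ≤ 1) :
    ball (AffineMap.lineMap v m t) (t * dist v m) ⊆ closedBall m (dist v m) := by
  refine (ball_subset_ball' ?_).trans ball_subset_closedBall
  rw [dist_lineMap_right, Real.norm_eq_abs, abs_of_nonneg (by linarith)]
  linarith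

theorem exists_sphere_through_of_finite {S : Set E} (hS : S.Finite) (hne : S.Nonempty)
    {v m : E} (hsub : S ⊆ closedBall m (dist v m)) (hv : v ∉ S) :
    ∃ w ∈ S, ∃ t : ℝ, 0 < t ∧ t ≤ 1 ∧ dist w (AffineMap.lineMap v m t) = t * dist v m ∧
      Disjoint S (ball (AffineMap.lineMap v m t) (t * dist v m)) := by
  have hpos : ∀ p ∈ S, 0 < ‖p - v‖ ^ 2 := fun p hp =>
    pow_pos (norm_pos_iff.mpr (sub_ne_zero.mpr (ne_of_mem_of_not_mem hp hv))) 2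
  have hle : ∀ p ∈ S, ‖p - v‖ ^ 2 ≤ 2 * ⟪p - v, m - v⟫ := fun p hp =>
    norm_sub_sq_le_two_inner_of_mem_closedBall (hsub hp)
  obtain ⟨w, hwS, hmin⟩ :=
    S.exists_min_image (fun p => ‖p - v‖ ^ 2 / (2 * ⟪p - v, m - v⟫)) hS hne
  have hbw : 0 < 2 * ⟪w - v, m - v⟫ := (hpos w hwS).trans_le (hle w hwS)
  set t := ‖w - v‖ ^ 2 / (2 * ⟪w - v, m - v⟫)
  have ht₀ : 0 < t := div_pos (hpos w hwS) hbw
  refine ⟨w, hwS, t, ht₀, div_le_one_of_le₀ (hle w hwS) hbw.le,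
    (dist_lineMap_eq_iff ht₀.le).mpr (div_mul_cancel₀ _ hbw.ne').symm, ?_⟩
  refine Set.disjoint_left.mpr fun p hpS hpball => ?_
  have hlt := (dist_lineMap_lt_iff ht₀.le).mp (mem_ball.mp hpball)
  have hbp : 0 < 2 * ⟪p - v, m - v⟫ := (hpos p hpS).trans_le (hle p hpS)
  exact (hmin p hpS).not_gt ((div_lt_iff₀ hbp).mpr hlt)

theorem stmt1_general {d : ℕ} (N : Set (EuclideanSpace ℝ (Fin d)))
    (hloc : ∀ (x : EuclideanSpace ℝ (Fin d)) (r : ℝ),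
      (N ∩ Metric.closedBall x r).Finite)
    (u v : EuclideanSpace ℝ (Fin d)) (hu : u ∈ N) (huv : u ≠ v) :
    ∃ w ∈ N, w ≠ v ∧
      (∃ (c : EuclideanSpace ℝ (Fin d)) (r : ℝ),
        dist v c = r ∧ dist w c = r ∧ ∀ p ∈ N, p ∉ Metric.ball c r) ∧
      w ∈ Metric.closedBall (midpoint ℝ u v) (dist u v / 2) := by
  set m := midpoint ℝ u v
  have hR : dist v m = dist u v / 2 := by
    rw [dist_right_midpoint, Real.norm_two]; ring
  have huB : u ∈ closedBall m (dist v m) := by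
    rw [mem_closedBall, hR, dist_left_midpoint, Real.norm_two]; linarith
  obtain ⟨w, ⟨⟨hwN, hwB⟩, hwv⟩, t, ht₀, ht₁, hwc, hempty⟩ :=
    exists_sphere_through_of_finite (S := (N ∩ closedBall m (dist v m)) \ {v})
      ((hloc m _).subset Set.sdiff_subset) ⟨u, ⟨hu, huB⟩, huv⟩ (fun p hp => hp.1.2)
      (fun hv => hv.2 rfl)
  have hvc : dist v (AffineMap.lineMap v m t) = t * dist v m := by
    rw [dist_left_lineMap, Real.norm_eq_abs, abs_of_pos ht₀]
  refine ⟨w, hwN, hwv, ⟨_, _, hvc, hwc, fun p hpN hpball => ?_⟩, hR ▸ hwB⟩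
  have hpv : p ≠ v := by rintro rfl; exact (mem_ball.mp hpball).ne hvc
  exact Set.disjoint_left.mp hempty
    ⟨⟨hpN, ball_lineMap_subset_closedBall v m ht₁ hpball⟩, hpv⟩ hpball

/-- For a locally finite set `N ⊆ ℝ^d` and distinct `u v ∈ N`, there is a
Delaunay neighbour `w` of `v` lying in the closed ball with diameter `[u,v]`. -/
theorem stmt1 {d : ℕ} (N : Set (EuclideanSpace ℝ (Fin d)))
    (hloc : ∀ (x : EuclideanSpace ℝ (Fin d)) (r : ℝ),
      (N ∩ Metric.closedBall x r).Finite)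
    (u v : EuclideanSpace ℝ (Fin d)) (hu : u ∈ N) (hv : v ∈ N) (huv : u ≠ v) :
    ∃ w ∈ N, w ≠ v ∧
      (∃ (c : EuclideanSpace ℝ (Fin d)) (r : ℝ),
        dist v c = r ∧ dist w c = r ∧ ∀ p ∈ N, p ∉ Metric.ball c r) ∧
      w ∈ Metric.closedBall (midpoint ℝ u v) (dist u v / 2) :=
  stmt1_general N hloc u v hu huv
end

section
/- Let $\mathcal{N}$ be a locally finite set of points in $\mathbb{R}^d$ and let $u,v\in\mathcal{N}$ be distinct. Then there exists a finite path $v=w_0,w_1,\ldots,w_k=u$ in the Delaunay graph of $\mathcal{N}$ (each consecutive pair being Delaunay neighbours) such that every $w_i$ lies in the closed ball of center $u$ and radius $|u-v|$. -/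
/-!
Grow the balls whose boundary passes through `v` and whose centres move from `v` towards the
midpoint of `[v, u]`. The first of them whose boundary meets another point `p` of `N` contains
no point of `N` in its interior, so `p` is a Delaunay neighbour of `v`; and since `p` lies in the
ball with diameter `[v, u]`, it is strictly closer to `u` than `v` is. Local finiteness makes
this descent reach `u` after finitely many steps.
-/

open Metric RealInnerProductSpace

def delaunayGraph {X : Type*} [PseudoMetricSpace X] (N : Set X) : SimpleGraph X where
  Adj x y := x ≠ y ∧ ∃ (c : X) (r : ℝ), dist x c = r ∧ dist y c = r ∧ ∀ p ∈ N, p ∉ ball c r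
  symm := ⟨fun _ _ ⟨hxy, c, r, hx, hy, hN⟩ => ⟨hxy.symm, c, r, hy, hx, hN⟩⟩
  loopless := ⟨fun _ h => h.1 rfl⟩

theorem delaunayGraph_adj {X : Type*} [PseudoMetricSpace X] {N : Set X} {x y : X} :
    (delaunayGraph N).Adj x y ↔
      x ≠ y ∧ ∃ (c : X) (r : ℝ), dist x c = r ∧ dist y c = r ∧ ∀ p ∈ N, p ∉ ball c r :=
  Iff.rfl

theorem ncard_inter_closedBall_lt {X : Type*} [PseudoMetricSpace X] {N : Set X} {x y : X}
    {r s : ℝ}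
    (hfin : (N ∩ closedBall x r).Finite) (hy : y ∈ N) (hyr : dist y x ≤ r) (hsy : s < dist y x) :
    (N ∩ closedBall x s).ncard < (N ∩ closedBall x r).ncard := by
  refine Set.ncard_lt_ncard ((Set.ssubset_iff_of_subset ?_).2 ⟨y, ⟨hy, hyr⟩, ?_⟩) hfin
  · exact Set.inter_subset_inter_right _ (closedBall_subset_closedBall (hsy.le.trans hyr))
  · exact fun h => (not_le.2 hsy) h.2

variable {E : Type*} [NormedAddCommGroup E] [InnerProductSpace ℝ E]

theorem dist_sq_sub_dist_sq (q v c : E) :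
    dist q c ^ 2 - dist v c ^ 2 = dist q v ^ 2 - 2 * ⟪q - v, c - v⟫ := by
  have : q - c = (q - v) - (c - v) := by abel
  rw [dist_eq_norm, dist_eq_norm, dist_eq_norm, this, norm_sub_sq_real, ← norm_neg (v - c),
    neg_sub]
  ring

theorem mem_ball_dist_iff_dist_sq_lt_inner {q v c : E} :
    q ∈ ball c (dist v c) ↔ dist q v ^ 2 < 2 * ⟪q - v, c - v⟫ := by
  rw [mem_ball, ← sq_lt_sq₀ dist_nonneg dist_nonneg]
  have := dist_sq_sub_dist_sq q v c
  constructor <;> intro h <;> linarith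

-- Thales; the hypothesis says that `q` lies in the closed ball with diameter `[v, u]`.
theorem dist_sq_add_dist_sq_le {q u v : E} (h : dist q v ^ 2 ≤ ⟪q - v, u - v⟫) :
    dist q u ^ 2 + dist q v ^ 2 ≤ dist v u ^ 2 := by
  linarith [dist_sq_sub_dist_sq q v u]

theorem exists_delaunayGraph_adj_dist_lt {N : Set E} {u v : E}
    (hfin : (N ∩ closedBall u (dist u v)).Finite) (hu : u ∈ N) (huv : u ≠ v) :
    ∃ p ∈ N, (delaunayGraph N).Adj v p ∧ dist u p < dist u v := by
  set S : Set E := {q | q ∈ N ∧ q ≠ v ∧ dist q v ^ 2 ≤ ⟪q - v, u - v⟫}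
  have hclose : ∀ q ∈ S, dist u q < dist u v := by
    rintro q ⟨-, hqv, hq⟩
    rw [dist_comm u q, dist_comm u v, ← sq_lt_sq₀ dist_nonneg dist_nonneg]
    linarith [dist_sq_add_dist_sq_le hq, pow_pos (dist_pos.2 hqv) 2]
  have hinner : ∀ q ∈ S, 0 < ⟪q - v, u - v⟫ := fun q ⟨_, hqv, hq⟩ =>
    (pow_pos (dist_pos.2 hqv) 2).trans_le hq
  have hSfin : S.Finite :=
    hfin.subset fun q hq => ⟨hq.1, by rw [mem_closedBall, dist_comm]; exact (hclose q hq).le⟩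
  have huS : u ∈ S := ⟨hu, huv, by rw [real_inner_self_eq_norm_sq, dist_eq_norm]⟩
  -- `p` minimises the parameter `t` at which the sphere through `v` centred at
  -- `v + (t / 2) • (u - v)` reaches it.
  obtain ⟨p, hpS, hpmin⟩ :=
    S.exists_min_image (fun q => dist q v ^ 2 / ⟪q - v, u - v⟫) hSfin ⟨u, huS⟩
  set T := dist p v ^ 2 / ⟪p - v, u - v⟫
  have hT : T * ⟪p - v, u - v⟫ = dist p v ^ 2 := div_mul_cancel₀ _ (hinner p hpS).ne'
  have hT_pos : 0 < T := div_pos (pow_pos (dist_pos.2 hpS.2.1) 2) (hinner p hpS)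
  have hT_le_one : T ≤ 1 := by
    have := hpmin u huS
    rwa [dist_eq_norm, ← real_inner_self_eq_norm_sq, div_self (hinner u huS).ne'] at this
  set c := v + (T / 2) • (u - v)
  have hinner_c : ∀ q : E, 2 * ⟪q - v, c - v⟫ = T * ⟪q - v, u - v⟫ := fun q => by
    rw [add_sub_cancel_left, inner_smul_right]; ring
  refine ⟨p, hpS.1, delaunayGraph_adj.2 ⟨hpS.2.1.symm, c, dist v c, rfl, ?_, fun q hqN hq => ?_⟩,
    hclose p hpS⟩
  · have := dist_sq_sub_dist_sq p v c
    rw [hinner_c, hT, sub_self, sub_eq_zero] at this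
    exact (sq_eq_sq₀ dist_nonneg dist_nonneg).1 this
  · rw [mem_ball_dist_iff_dist_sq_lt_inner, hinner_c] at hq
    have hq_pos : 0 < ⟪q - v, u - v⟫ :=
      pos_of_mul_pos_right ((sq_nonneg _).trans_lt hq) hT_pos.le
    have hqS : q ∈ S := ⟨hqN, by rintro rfl; simp at hq, by nlinarith⟩
    have := hpmin q hqS
    rw [le_div_iff₀ hq_pos] at this
    linarith

theorem exists_walk_delaunayGraph {N : Set E} (hloc : ∀ x r, (N ∩ closedBall x r).Finite)
    {u : E} (hu : u ∈ N) (v : E) (hv : v ∈ N) :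
    ∃ w : (delaunayGraph N).Walk v u, ∀ x ∈ w.support, x ∈ N ∧ dist u x ≤ dist u v := by
  induction hn : (N ∩ closedBall u (dist u v)).ncard using Nat.strong_induction_on
    generalizing v with
  | _ n ih =>
  by_cases huv : u = v
  · subst huv
    exact ⟨SimpleGraph.Walk.nil, by simp [hu]⟩
  obtain ⟨p, hp, hadj, hlt⟩ := exists_delaunayGraph_adj_dist_lt (hloc u _) hu huv
  have hcard := ncard_inter_closedBall_lt (hloc u (dist u v)) hv (dist_comm v u).le
    (by rwa [dist_comm v u])
  obtain ⟨w, hw⟩ := ih _ (hn ▸ hcard) p hp rfl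
  refine ⟨SimpleGraph.Walk.cons hadj w, ?_⟩
  intro x hx
  rcases (SimpleGraph.Walk.mem_support_iff _).1 hx with rfl | hx
  · exact ⟨hv, le_rfl⟩
  · exact ⟨(hw x hx).1, (hw x hx).2.trans hlt.le⟩

theorem stmt2_general {d : ℕ} (N : Set (EuclideanSpace ℝ (Fin d)))
    (hloc : ∀ (x : EuclideanSpace ℝ (Fin d)) (r : ℝ),
      (N ∩ Metric.closedBall x r).Finite)
    (u v : EuclideanSpace ℝ (Fin d)) (hu : u ∈ N) (hv : v ∈ N) :
    ∃ (k : ℕ) (w : Fin (k + 1) → EuclideanSpace ℝ (Fin d)),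
      w 0 = v ∧ w (Fin.last k) = u ∧ (∀ i, w i ∈ N) ∧
      (∀ i j : Fin (k + 1), (i : ℕ) + 1 = (j : ℕ) →
        w i ≠ w j ∧
        ∃ (c : EuclideanSpace ℝ (Fin d)) (r : ℝ),
          dist (w i) c = r ∧ dist (w j) c = r ∧ ∀ p ∈ N, p ∉ Metric.ball c r) ∧
      (∀ i, w i ∈ Metric.closedBall u (dist u v)) := by
  obtain ⟨w, hw⟩ := exists_walk_delaunayGraph hloc hu v hv
  refine ⟨w.length, fun i => w.getVert i, w.getVert_zero, by simp [w.getVert_length],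
    fun i => (hw _ (w.getVert_mem_support i)).1, fun i j hij => ?_, fun i => ?_⟩
  · have := w.adj_getVert_succ (i := i) (by omega)
    rw [hij] at this
    exact delaunayGraph_adj.1 this
  · rw [mem_closedBall, dist_comm]
    exact (hw _ (w.getVert_mem_support i)).2

/-- For a locally finite set `N ⊆ ℝ^d` and distinct `u v ∈ N`, there is a path
`v = w 0, …, w k = u` in the Delaunay graph of `N`, entirely contained in the
closed ball of center `u` and radius `|u - v|`. -/
theorem stmt2 {d : ℕ} (N : Set (EuclideanSpace ℝ (Fin d)))
    (hloc : ∀ (x : EuclideanSpace ℝ (Fin d)) (r : ℝ),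
      (N ∩ Metric.closedBall x r).Finite)
    (u v : EuclideanSpace ℝ (Fin d)) (hu : u ∈ N) (hv : v ∈ N) (huv : u ≠ v) :
    ∃ (k : ℕ) (w : Fin (k + 1) → EuclideanSpace ℝ (Fin d)),
      w 0 = v ∧ w (Fin.last k) = u ∧ (∀ i, w i ∈ N) ∧
      (∀ i j : Fin (k + 1), (i : ℕ) + 1 = (j : ℕ) →
        w i ≠ w j ∧
        ∃ (c : EuclideanSpace ℝ (Fin d)) (r : ℝ),
          dist (w i) c = r ∧ dist (w j) c = r ∧ ∀ p ∈ N, p ∉ Metric.ball c r) ∧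
      (∀ i, w i ∈ Metric.closedBall u (dist u v)) :=
  stmt2_general N hloc u v hu hv
end

section
/- Let $\mathbf{A}$ be a lattice animal of $\mathbb{G}_d$ (a finite connected set of vertices of $\mathbb{Z}^d$ with the $\ell^\infty$-adjacency, where $\mathbf{z}\sim\mathbf{z}'$ iff $|\mathbf{z}-\mathbf{z}'|_\infty=1$) containing the origin $\mathbf{0}$, with $|\mathbf{A}|=m$, and let $l\geq 1$ be an integer. Then there exists a sequence $\mathbf{x}_0=\mathbf{0},\mathbf{x}_1,\ldots,\mathbf{x}_h\in\mathbb{Z}^d$ with $h+1\leq 1+(2m-2)/l$ such that $\mathbf{A}\subseteq\bigcup_{i=0}^h\Lambda(l\mathbf{x}_i,2l)$ and $|\mathbf{x}_{i+1}-\mathbf{x}_i|_\infty\leq 1$ for $0\leq i\leq h-1$, where $\Lambda(\mathbf{x},l)=\{\mathbf{x}+\mathbf{k}:\mathbf{k}\in[-l,l]^d\cap\mathbb{Z}^d\}$. -/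
/-!
Traversing a spanning tree of `A` depth-first gives a walk from `0` of length at most
`2(m - 1)`, with steps of `ℓ^∞`-length at most one, that visits every point of `A`; here it is
built by repeatedly splicing a detour `x → y → x` to an unvisited neighbour `y` into the walk.
Sample the walk every `l` steps and let `xᵢ := ⌊w(i l) / l⌋` coordinatewise. Consecutive
samples are at distance at most `l`, so their cells differ by at most one, and every point of
the walk lies within `l - 1` of the last sample before it, which lies within `l - 1` of `l xᵢ`.
-/

open Finset Relation

variable {α : Type*}

theorem Relation.ReflTransGen.exists_rel_of_mem_of_notMem {r : α → α → Prop} {s : Set α}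
    {a b : α} (h : ReflTransGen r a b) (ha : a ∈ s) (hb : b ∉ s) :
    ∃ x ∈ s, ∃ y ∉ s, r x y := by
  induction h with
  | refl => exact absurd ha hb
  | @tail c b _ hcb ih =>
    by_cases hc : c ∈ s
    · exact ⟨c, hc, b, hb, hcb⟩
    · exact ih hc

theorem Relation.ReflTransGen.of_fin {r : α → α → Prop} {k : ℕ} (w : Fin (k + 1) → α)
    (hw : ∀ i j : Fin (k + 1), (i : ℕ) + 1 = j → r (w i) (w j)) :
    ReflTransGen r (w 0) (w (Fin.last k)) := by
  have hchain : (List.ofFn w).IsChain r :=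
    List.isChain_ofFn.2 fun i hi => hw ⟨i, by omega⟩ ⟨i + 1, hi⟩ rfl
  have h := List.relationReflTransGen_of_exists_isChain _ hchain (by simp)
  rwa [List.head_ofFn, List.getLast_ofFn] at h

theorem List.IsChain.exists_detour {r : α → α → Prop} {L : List α} (hL : L.IsChain r)
    {x y : α} (hx : x ∈ L) (hxy : r x y) (hyx : r y x) :
    ∃ L' : List α, L'.IsChain r ∧ L'.head? = L.head? ∧ L'.length = L.length + 2 ∧
      y ∈ L' ∧ L ⊆ L' := by
  obtain ⟨l₁, l₂, rfl⟩ := List.append_of_mem hx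
  refine ⟨l₁ ++ x :: y :: x :: l₂, ?_, ?_, ?_, by simp, ?_⟩
  · rw [List.isChain_split] at hL
    simp [hL.1, hL.2, hxy, hyx]
  · cases l₁ <;> simp
  · simp only [List.length_append, List.length_cons]
    omega
  · intro a
    simp only [List.mem_append, List.mem_cons]
    tauto

theorem exists_isChain_covering [DecidableEq α] {r : α → α → Prop} [Std.Symm r]
    {A : Finset α} {b : α} (hA : ∀ a ∈ A, ReflTransGen (fun x y => r x y ∧ y ∈ A) b a) :
    ∃ L : List α, L.IsChain r ∧ L.head? = some b ∧ (∀ a ∈ A, a ∈ L) ∧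
      L.length ≤ 2 * #(A.erase b) + 1 := by
  suffices key : ∀ k (L : List α), L.IsChain r → L.head? = some b → #(A \ L.toFinset) ≤ k →
      ∃ L' : List α, L'.IsChain r ∧ L'.head? = some b ∧ (∀ a ∈ A, a ∈ L') ∧
        L'.length ≤ L.length + 2 * k by
    simpa [add_comm, ← Finset.sdiff_singleton_eq_erase] using
      key _ [b] (List.isChain_singleton b) rfl le_rfl
  intro k
  induction k with
  | zero =>
    intro L hL hb hk
    refine ⟨L, hL, hb, fun a ha => ?_, le_rfl⟩
    simp only [Nat.le_zero, Finset.card_eq_zero, Finset.sdiff_eq_empty_iff_subset] at hk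
    simpa using hk ha
  | succ k ih =>
    intro L hL hb hk
    by_cases hcov : ∀ a ∈ A, a ∈ L
    · exact ⟨L, hL, hb, hcov, by omega⟩
    push Not at hcov
    obtain ⟨a, ha, haL⟩ := hcov
    obtain ⟨x, hxL, y, hyL, hxy, hyA⟩ :=
      (hA a ha).exists_rel_of_mem_of_notMem (s := {c | c ∈ L}) (List.mem_of_mem_head? hb) haL
    obtain ⟨L', hL', hhead, hlen, hyL', hLL'⟩ := hL.exists_detour hxL hxy (symm_of r hxy)
    have hssub : A \ L'.toFinset ⊂ A \ L.toFinset := by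
      refine Finset.ssubset_iff_of_subset ?_ |>.2
        ⟨y, Finset.mem_sdiff.2 ⟨hyA, by simpa using hyL⟩, by simp [hyL']⟩
      exact Finset.sdiff_subset_sdiff le_rfl fun c => by simpa using @hLL' c
    obtain ⟨L'', hL'', hb'', hcov'', hlen''⟩ :=
      ih L' hL' (hhead.trans hb) (by have := Finset.card_lt_card hssub; omega)
    exact ⟨L'', hL'', hb'', hcov'', by omega⟩

theorem exists_walk_covering [DecidableEq α] {r : α → α → Prop} [Std.Symm r]
    {A : Finset α} {b : α} (hA : ∀ a ∈ A, ReflTransGen (fun x y => r x y ∧ y ∈ A) b a) :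
    ∃ (n : ℕ) (w : ℕ → α), w 0 = b ∧ (∀ t < n, r (w t) (w (t + 1))) ∧
      (∀ a ∈ A, ∃ t ≤ n, w t = a) ∧ n ≤ 2 * #(A.erase b) := by
  obtain ⟨L, hL, hhead, hcov, hlen⟩ := exists_isChain_covering hA
  refine ⟨L.length - 1, (L.getD · b), ?_, fun t ht => ?_, fun a ha => ?_, by omega⟩
  · cases L <;> simp_all
  · show r (L.getD t b) (L.getD (t + 1) b)
    rw [List.getD_eq_getElem _ _ (by omega), List.getD_eq_getElem _ _ (by omega)]
    exact List.isChain_iff_getElem.1 hL t (by omega)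
  · obtain ⟨t, ht, rfl⟩ := List.mem_iff_getElem.1 (hcov a ha)
    exact ⟨t, by omega, List.getD_eq_getElem _ _ ht⟩

namespace Int

theorem abs_sub_le_of_abs_sub_succ_le_one {f : ℕ → ℤ} {n : ℕ}
    (hf : ∀ t < n, |f t - f (t + 1)| ≤ 1) {u t : ℕ} (hut : u ≤ t) (htn : t ≤ n) :
    |f u - f t| ≤ t - u := by
  induction t, hut using Nat.le_induction with
  | base => simp
  | succ t hut ih =>
    calc |f u - f (t + 1)| ≤ |f u - f t| + |f t - f (t + 1)| := abs_sub_le _ _ _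
      _ ≤ (t - u) + 1 := add_le_add (ih (by omega)) (hf t (by omega))
      _ = ((t + 1 : ℕ) : ℤ) - u := by push_cast; ring

theorem ediv_le_ediv_add_one {a b l : ℤ} (hl : 0 < l) (h : a ≤ b + l) : a / l ≤ b / l + 1 :=
  (Int.ediv_le_iff_le_mul hl).2 (by linarith [Int.lt_ediv_add_one_mul_self b hl])

theorem abs_ediv_sub_ediv_le_one {a b l : ℤ} (hl : 0 < l) (h : |a - b| ≤ l) :
    |a / l - b / l| ≤ 1 := by
  rw [abs_sub_le_iff] at h ⊢
  constructor
  · linarith [ediv_le_ediv_add_one hl (a := a) (b := b) (by linarith)]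
  · linarith [ediv_le_ediv_add_one hl (a := b) (b := a) (by linarith)]

theorem abs_sub_mul_ediv_lt (a : ℤ) {l : ℤ} (hl : 0 < l) : |a - l * (a / l)| < l := by
  rw [← Int.emod_def, abs_of_nonneg (Int.emod_nonneg a hl.ne')]
  exact Int.emod_lt_of_pos a hl

end Int

def SupDistLeOne {d : ℕ} (x y : Fin d → ℤ) : Prop := ∀ s, |x s - y s| ≤ 1

instance {d : ℕ} : Std.Symm (SupDistLeOne (d := d)) :=
  ⟨fun x y h s => abs_sub_comm (x s) (y s) ▸ h s⟩

theorem exists_boxChain_of_walk {d n l : ℕ} (hl : 0 < l) {w : ℕ → Fin d → ℤ} (hw0 : w 0 = 0)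
    (hw : ∀ t < n, SupDistLeOne (w t) (w (t + 1))) :
    ∃ x : Fin (n / l + 1) → Fin d → ℤ, x 0 = 0 ∧
      (∀ t ≤ n, ∃ i, ∀ s, |w t s - l * x i s| ≤ 2 * l) ∧
      ∀ i j : Fin (n / l + 1), (i : ℕ) + 1 = j → ∀ s, |x i s - x j s| ≤ 1 := by
  have hlZ : (0 : ℤ) < l := by exact_mod_cast hl
  have hdist (s : Fin d) {u t : ℕ} (hut : u ≤ t) (htn : t ≤ n) :=
    Int.abs_sub_le_of_abs_sub_succ_le_one (f := (w · s)) (fun t ht => hw t ht s) hut htn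
  refine ⟨fun i s => w (i * l) s / l, by ext; simp [hw0], fun t ht => ?_, fun i j hij s => ?_⟩
  · refine ⟨⟨t / l, by have := Nat.div_le_div_right (c := l) ht; omega⟩, fun s => ?_⟩
    have hblock : |w (t / l * l) s - w t s| < l := by
      refine (hdist s (Nat.div_mul_le_self t l) ht).trans_lt ?_
      have := Nat.lt_div_mul_add (a := t) hl
      rw [← Nat.cast_sub (Nat.div_mul_le_self t l)]
      exact_mod_cast (by omega : t - t / l * l < l)
    calc |w t s - l * (w (t / l * l) s / l)|
        ≤ |w t s - w (t / l * l) s| + |w (t / l * l) s - l * (w (t / l * l) s / l)| :=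
          abs_sub_le _ _ _
      _ ≤ 2 * l := by
          rw [abs_sub_comm] at hblock
          linarith [Int.abs_sub_mul_ediv_lt (w (t / l * l) s) hlZ]
  · have hjn : (j : ℕ) * l ≤ n := (Nat.le_div_iff_mul_le hl).1 (Nat.lt_succ_iff.1 j.2)
    refine Int.abs_ediv_sub_ediv_le_one hlZ ((hdist s (by gcongr; omega) hjn).trans ?_)
    rw [← hij]
    push_cast
    linarith

/-- Lemma 1 of Cox–Gandolfi–Griffin–Kesten: a lattice animal `A` of `𝔾_d`
(`ℓ^∞`-adjacency on `ℤ^d`) containing `0` with `|A| = m` can be covered by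
`h + 1 ≤ 1 + (2m-2)/l` boxes `Λ(l xᵢ, 2l)` with `|x_{i+1} - x_i|_∞ ≤ 1`. -/
theorem stmt10 (d : ℕ) (A : Finset (Fin d → ℤ)) (h0 : (0 : Fin d → ℤ) ∈ A)
    (hconn : ∀ z ∈ A, ∀ z' ∈ A, ∃ (k : ℕ) (w : Fin (k + 1) → (Fin d → ℤ)),
      w 0 = z ∧ w (Fin.last k) = z' ∧ (∀ i, w i ∈ A) ∧
      ∀ i j : Fin (k + 1), (i : ℕ) + 1 = (j : ℕ) →
        w i ≠ w j ∧ ∀ s : Fin d, |w i s - w j s| ≤ 1)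
    (m : ℕ) (hm : A.card = m) (l : ℕ) (hl : 1 ≤ l) :
    ∃ (h : ℕ) (x : Fin (h + 1) → (Fin d → ℤ)),
      x 0 = 0 ∧
      ((h : ℝ) + 1 ≤ 1 + (2 * (m : ℝ) - 2) / l) ∧
      (∀ z ∈ A, ∃ i : Fin (h + 1), ∀ s : Fin d,
        |z s - (l : ℤ) * x i s| ≤ 2 * (l : ℤ)) ∧
      (∀ i j : Fin (h + 1), (i : ℕ) + 1 = (j : ℕ) →
        ∀ s : Fin d, |x i s - x j s| ≤ 1) := by
  classical
  have hreach (z) (hz : z ∈ A) :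
      ReflTransGen (fun x y => SupDistLeOne x y ∧ y ∈ A) 0 z := by
    obtain ⟨k, w, hw0, hwk, hwA, hstep⟩ := hconn 0 h0 z hz
    rw [← hw0, ← hwk]
    exact .of_fin w fun i j hij => ⟨(hstep i j hij).2, hwA j⟩
  obtain ⟨n, w, hw0, hw, hwA, hn⟩ := exists_walk_covering hreach
  obtain ⟨x, hx0, hcov, hstep⟩ := exists_boxChain_of_walk hl hw0 hw
  refine ⟨n / l, x, hx0, ?_, fun z hz => ?_, hstep⟩
  · have hnm : (n : ℝ) + 2 ≤ 2 * m := by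
      have := Finset.card_erase_add_one h0
      exact_mod_cast (by omega : n + 2 ≤ 2 * m)
    calc ((n / l : ℕ) : ℝ) + 1 ≤ n / l + 1 := by gcongr; exact Nat.cast_div_le
      _ ≤ 1 + (2 * m - 2) / l := by rw [add_comm]; gcongr; linarith
  · obtain ⟨t, ht, rfl⟩ := hwA z hz
    exact hcov t ht
end
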